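/- Let α ∈ ℤ[ω] (ω a primitive cube root of unity) with 3 not dividing N(α). Then α or −α can be written in the form −1 + (A+Bω)(1−ω) for some integers A, B. -/

import Mathlib

/-! Since `x² - xy + y² = (x + y)² - 3xy`, the hypothesis says `3 ∤ x + y`, so a sign `ε` makes
`ε(x + y) ≡ -1 (mod 3)`. Since `ω ≡ 1` modulo `1 - ω`, which divides `3`, an element `a + bω` with
`a + b ≡ -1 (mod 3)` is `-1` plus an explicit multiple of `1 - ω`. -/

lemma IsPrimitiveRoot.sq_add_self_add_one {R : Type*} [CommRing R] [IsDomain R] {ζ : R}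
    (hζ : IsPrimitiveRoot ζ 3) : ζ ^ 2 + ζ + 1 = 0 := by
  have h := hζ.geom_sum_eq_zero (by norm_num)
  simp only [Finset.sum_range_succ, Finset.sum_range_zero, pow_zero, pow_one] at h
  linear_combination h

lemma Complex.exp_two_pi_I_div_three_sq_add_self_add_one :
    Complex.exp (2 * Real.pi * Complex.I / 3) ^ 2 + Complex.exp (2 * Real.pi * Complex.I / 3) + 1
      = 0 :=
  IsPrimitiveRoot.sq_add_self_add_one (by exact_mod_cast Complex.isPrimitiveRoot_exp 3 (by norm_num))

lemma Int.three_dvd_sq_sub_mul_add_sq_of_three_dvd_add {x y : ℤ} (h : (3 : ℤ) ∣ x + y) :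
    (3 : ℤ) ∣ x ^ 2 - x * y + y ^ 2 := by
  have key : x ^ 2 - x * y + y ^ 2 = (x + y) ^ 2 - 3 * (x * y) := by ring
  rw [key]
  exact (dvd_pow h two_ne_zero).sub (dvd_mul_right 3 _)

lemma Int.exists_sign_three_dvd_mul_add_one {n : ℤ} (h : ¬ (3 : ℤ) ∣ n) :
    ∃ ε : ℤ, (ε = 1 ∨ ε = -1) ∧ (3 : ℤ) ∣ ε * n + 1 := by
  rcases (by omega : n % 3 = 1 ∨ n % 3 = 2) with h1 | h2
  · exact ⟨-1, Or.inr rfl, by omega⟩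
  · exact ⟨1, Or.inl rfl, by omega⟩

lemma add_mul_eq_neg_one_add_mul_one_sub {R : Type*} [CommRing R] {ζ : R}
    (hζ : ζ ^ 2 + ζ + 1 = 0) {a b k : R} (hk : a + b + 1 = 3 * k) :
    a + b * ζ = -1 + ((a + 1 - k) + k * ζ) * (1 - ζ) := by
  linear_combination ζ * hk + k * hζ

theorem eisenstein_unit_normal_form (x y : ℤ) (h : ¬ (3 : ℤ) ∣ (x^2 - x*y + y^2)) :
    let ω : ℂ := Complex.exp (2 * Real.pi * Complex.I / 3)
    ∃ (A B ε : ℤ), (ε = 1 ∨ ε = -1) ∧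
      (ε : ℂ) * ((x : ℂ) + (y : ℂ) * ω) = -1 + ((A : ℂ) + (B : ℂ) * ω) * (1 - ω) := by
  intro ω
  obtain ⟨ε, hε, k, hk⟩ := Int.exists_sign_three_dvd_mul_add_one
    (mt Int.three_dvd_sq_sub_mul_add_sq_of_three_dvd_add h)
  refine ⟨ε * x + 1 - k, k, ε, hε, ?_⟩
  have hkC : (ε * x : ℂ) + ε * y + 1 = 3 * k := by
    exact_mod_cast (by linear_combination hk : ε * x + ε * y + 1 = 3 * k)
  push_cast
  rw [mul_add, ← mul_assoc]
  exact add_mul_eq_neg_one_add_mul_one_sub Complex.exp_two_pi_I_div_three_sq_add_self_add_one hkC
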